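/- Let n ≥ 2 be an integer and k ≤ 0 a real number. Let (X,d) be a metric space and let μ be a Borel measure on X which is finite on bounded sets, with μ(B_r(x)) > 0 for every open ball, and with μ({x : d(x,p) = r}) = 0 for every p ∈ X and r > 0. Assume: (a) (Lebesgue density property) for every Borel set E ⊆ X, μ-almost every point of E belongs to E¹ and μ-almost every point of X ∖ E belongs to E⁰; (b) (small-ball perimeter comparison) for μ-almost every x ∈ X one has H^{n−1}(∂*B_ρ(x)) ≤ s(n,k,ρ) for every ρ > 0. Define the isoperimetric profile I_X(V) := inf{ H^{n−1}(∂*E) : E ⊆ X Borel, μ(E) = V } ∈ [0,+∞] for V ∈ (0, μ(X)) (the infimum of the empty family being +∞). Then I_X is upper semicontinuous on (0, μ(X)). -/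

import Mathlib

open MeasureTheory Metric Filter Bornology
open scoped ENNReal

/-- `sn_k`: the generalized sine function of the simply connected model
of constant sectional curvature `k ≤ 0`. -/
noncomputable def snK (k r : ℝ) : ℝ :=
  if k = 0 then r else Real.sinh (Real.sqrt (-k) * r) / Real.sqrt (-k)

/-- `s(n,k,r)`: surface area of the sphere of radius `r` in the `n`-dimensional
simply connected model of constant curvature `k`. -/
noncomputable def modelSurf (n : ℕ) (k r : ℝ) : ℝ :=
  n * (volume (ball (0 : EuclideanSpace ℝ (Fin n)) 1)).toReal * snK k r ^ (n - 1)

/-- The set of points of density `t` of a set `E` in a metric measure space. -/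
def densitySet {X : Type*} [MetricSpace X] [MeasurableSpace X]
    (μ : Measure X) (E : Set X) (t : ℝ≥0∞) : Set X :=
  {x : X | Tendsto (fun r : ℝ => μ (E ∩ ball x r) / μ (ball x r))
    (nhdsWithin 0 (Set.Ioi 0)) (nhds t)}

/-- The essential boundary of a set `E` in a metric measure space: the complement of
the union of the sets of points of density `0` and of density `1`. -/
def essBoundary {X : Type*} [MetricSpace X] [MeasurableSpace X]
    (μ : Measure X) (E : Set X) : Set X :=
  (densitySet μ E 0 ∪ densitySet μ E 1)ᶜ

/-- The isoperimetric profile: the infimum of `H^{n-1}(∂*E)` over Borel sets `E` of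
measure `V` (`+∞` if there are no such sets). -/
noncomputable def isoProfile {X : Type*} [MetricSpace X] [MeasurableSpace X] [BorelSpace X]
    (μ : Measure X) (n : ℕ) (V : ℝ) : ℝ≥0∞ :=
  ⨅ (E : Set X) (_ : MeasurableSet E) (_ : μ E = ENNReal.ofReal V),
    μH[(n : ℝ) - 1] (essBoundary μ E)

/-!
Given `E` of volume `V` with perimeter below `y`, nearby volumes are realised by removing from `E`
a small ball `B_ρ(x)` centred at a density-one point of `E`, or by adding one centred at a
density-zero point; by (a) and (b) such centres exist at which the bound on `H^{n-1}(∂*B_ρ(x))`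
holds. Since spheres are null, `ρ ↦ μ(E ∩ B_ρ(x))` is continuous, so every small change of volume
is attained, while the essential boundary is subadditive under union and difference, so the
perimeter grows by at most `s(n,k,ρ)`, which tends to `0` with `ρ`.
-/

open Set Topology

section BallMeasure

variable {X : Type*} [MetricSpace X] [MeasurableSpace X] {μ : Measure X} {F : Set X} {x : X}

theorem tendsto_measure_inter_ball_nhdsLT (r : ℝ) :
    Tendsto (fun s ↦ μ (F ∩ ball x s)) (𝓝[<] r) (𝓝 (μ (F ∩ ball x r))) := by
  have : (atTop : Filter (Iio r)).IsCountablyGenerated := by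
    rw [← comap_coe_Iio_nhdsLT r]
    infer_instance
  have hU : ⋃ s : Iio r, F ∩ ball x s = F ∩ ball x r := by
    rw [← biUnion_lt_ball x r, inter_iUnion₂, iUnion_subtype]
    rfl
  rw [← map_coe_Iio_atTop r, tendsto_map'_iff, ← hU]
  exact tendsto_measure_iUnion_atTop fun s t hst ↦
    inter_subset_inter_right F (ball_subset_ball (Subtype.coe_le_coe.2 hst))

theorem tendsto_measure_inter_ball_nhdsGT [OpensMeasurableSpace X] (hF : MeasurableSet F)
    (hfin : ∀ r, μ (ball x r) ≠ ∞) (r : ℝ) :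
    Tendsto (fun s ↦ μ (F ∩ ball x s)) (𝓝[>] r) (𝓝 (μ (F ∩ closedBall x r))) := by
  have hI : ⋂ s > r, F ∩ ball x s = F ∩ closedBall x r := by
    rw [← biInter_gt_ball]
    exact inter_biInter nonempty_Ioi _ F
  rw [← hI]
  refine tendsto_measure_biInter_gt (fun s _ ↦ (hF.inter measurableSet_ball).nullMeasurableSet)
    (fun s t _ hst ↦ inter_subset_inter_right F (ball_subset_ball hst))
    ⟨r + 1, by linarith, measure_ne_top_of_subset inter_subset_right (hfin _)⟩

theorem continuous_measure_inter_ball [OpensMeasurableSpace X] (hF : MeasurableSet F)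
    (hfin : ∀ r, μ (ball x r) ≠ ∞) (hsph : ∀ r, μ (sphere x r) = 0) :
    Continuous fun r ↦ μ (F ∩ ball x r) := by
  refine continuous_iff_continuousAt.2 fun r ↦ ?_
  have hclosed : μ (F ∩ closedBall x r) = μ (F ∩ ball x r) := by
    refine le_antisymm ?_ (measure_mono (inter_subset_inter_right F ball_subset_closedBall))
    calc μ (F ∩ closedBall x r) ≤ μ (F ∩ ball x r) + μ (sphere x r) := by
          rw [← ball_union_sphere, inter_union_distrib_left]
          exact (measure_union_le _ _).trans (add_le_add_right (measure_mono inter_subset_right) _)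
      _ = μ (F ∩ ball x r) := by rw [hsph, add_zero]
  have hright := tendsto_measure_inter_ball_nhdsGT hF hfin r
  rw [hclosed] at hright
  exact continuousAt_iff_continuous_left'_right'.2
    ⟨tendsto_measure_inter_ball_nhdsLT r, hright⟩

theorem exists_radius_measure_inter_ball_eq [OpensMeasurableSpace X] (hF : MeasurableSet F)
    (hfin : ∀ r, μ (ball x r) ≠ ∞) (hsph : ∀ r, μ (sphere x r) = 0) {r₀ : ℝ} (hr₀ : 0 ≤ r₀)
    {v : ℝ≥0∞} (hv : v ≤ μ (F ∩ ball x r₀)) : ∃ ρ ∈ Icc 0 r₀, μ (F ∩ ball x ρ) = v :=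
  intermediate_value_Icc hr₀ (continuous_measure_inter_ball hF hfin hsph).continuousOn
    ⟨by simp, hv⟩

theorem measure_sphere_eq_zero_of_pos [Nontrivial X]
    (hsph : ∀ (p : X) (r : ℝ), 0 < r → μ (sphere p r) = 0) (x : X) (r : ℝ) :
    μ (sphere x r) = 0 := by
  rcases lt_trichotomy r 0 with hr | rfl | hr
  · simp [sphere_eq_empty_of_neg hr]
  · obtain ⟨p, hp⟩ := exists_ne x
    rw [sphere_zero]
    exact measure_mono_null (singleton_subset_iff.2 (mem_sphere.2 rfl))
      (hsph p _ (dist_pos.2 hp.symm))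
  · exact hsph x r hr

end BallMeasure

section Density

variable {X : Type*} [MetricSpace X] [MeasurableSpace X] {μ : Measure X} {A B : Set X} {x : X}

theorem densitySet_one_mono (hAB : A ⊆ B) : densitySet μ A 1 ⊆ densitySet μ B 1 := fun x hx ↦
  tendsto_of_tendsto_of_tendsto_of_le_of_le hx tendsto_const_nhds
    (fun _ ↦ ENNReal.div_le_div_right (measure_mono (inter_subset_inter_left _ hAB)) _)
    fun _ ↦ ENNReal.div_le_of_le_mul (by rw [one_mul]; exact measure_mono inter_subset_right)

theorem inter_densitySet_zero_subset_union :
    densitySet μ A 0 ∩ densitySet μ B 0 ⊆ densitySet μ (A ∪ B) 0 := fun _ ⟨hA, hB⟩ ↦ by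
  refine tendsto_of_tendsto_of_tendsto_of_le_of_le tendsto_const_nhds
    (by simpa using hA.add hB) (fun _ ↦ zero_le) fun r ↦ ?_
  rw [← ENNReal.add_div, union_inter_distrib_right]
  exact ENNReal.div_le_div_right (measure_union_le _ _) _

theorem essBoundary_empty : essBoundary μ (∅ : Set X) = ∅ := by
  simp [essBoundary, densitySet]

theorem essBoundary_union_subset (A B : Set X) :
    essBoundary μ (A ∪ B) ⊆ essBoundary μ A ∪ essBoundary μ B := by
  rw [essBoundary, essBoundary, essBoundary, ← compl_inter, compl_subset_compl]
  rintro x ⟨hA | hA, hB | hB⟩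
  · exact Or.inl (inter_densitySet_zero_subset_union ⟨hA, hB⟩)
  · exact Or.inr (densitySet_one_mono subset_union_right hB)
  all_goals exact Or.inr (densitySet_one_mono subset_union_left hA)

theorem measure_compl_inter_ball_div (hfin : ∀ r, μ (ball x r) ≠ ∞)
    (hpos : ∀ r, 0 < r → 0 < μ (ball x r)) (hA : MeasurableSet A) {r : ℝ} (hr : 0 < r) :
    μ (Aᶜ ∩ ball x r) / μ (ball x r) = 1 - μ (A ∩ ball x r) / μ (ball x r) := by
  rw [← ENNReal.div_self (hpos r hr).ne' (hfin r), ← ENNReal.sub_div fun _ _ ↦ (hpos r hr).ne',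
    ← sdiff_eq_compl_inter, inter_comm A, ENNReal.eq_sub_of_add_eq
      (measure_ne_top_of_subset inter_subset_left (hfin r)) (measure_sdiff_add_inter _ hA)]

theorem densitySet_subset_compl (hfin : ∀ x r, μ (ball x r) ≠ ∞)
    (hpos : ∀ x r, 0 < r → 0 < μ (ball x r)) (hA : MeasurableSet A) (t : ℝ≥0∞) :
    densitySet μ A t ⊆ densitySet μ Aᶜ (1 - t) := fun x hx ↦
  ((ENNReal.continuous_sub_left ENNReal.one_ne_top).tendsto t |>.comp hx).congr'
    (eventually_nhdsWithin_of_forall fun _ hr ↦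
      (measure_compl_inter_ball_div (hfin x) (hpos x) hA hr).symm)

theorem densitySet_compl (hfin : ∀ x r, μ (ball x r) ≠ ∞)
    (hpos : ∀ x r, 0 < r → 0 < μ (ball x r)) (hA : MeasurableSet A) {t : ℝ≥0∞} (ht : t ≤ 1) :
    densitySet μ Aᶜ (1 - t) = densitySet μ A t := by
  refine (densitySet_subset_compl hfin hpos hA t).antisymm' ?_
  simpa [ENNReal.sub_sub_cancel ENNReal.one_ne_top ht] using
    densitySet_subset_compl hfin hpos hA.compl (1 - t)

theorem densitySet_compl_one (hfin : ∀ x r, μ (ball x r) ≠ ∞)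
    (hpos : ∀ x r, 0 < r → 0 < μ (ball x r)) (hA : MeasurableSet A) :
    densitySet μ Aᶜ 1 = densitySet μ A 0 := by
  simpa using densitySet_compl hfin hpos hA zero_le_one

theorem densitySet_compl_zero (hfin : ∀ x r, μ (ball x r) ≠ ∞)
    (hpos : ∀ x r, 0 < r → 0 < μ (ball x r)) (hA : MeasurableSet A) :
    densitySet μ Aᶜ 0 = densitySet μ A 1 := by
  simpa using densitySet_compl hfin hpos hA le_rfl

theorem essBoundary_compl (hfin : ∀ x r, μ (ball x r) ≠ ∞)
    (hpos : ∀ x r, 0 < r → 0 < μ (ball x r)) (hA : MeasurableSet A) :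
    essBoundary μ Aᶜ = essBoundary μ A := by
  rw [essBoundary, essBoundary, densitySet_compl_one hfin hpos hA,
    densitySet_compl_zero hfin hpos hA, union_comm]

theorem essBoundary_diff_subset (hfin : ∀ x r, μ (ball x r) ≠ ∞)
    (hpos : ∀ x r, 0 < r → 0 < μ (ball x r)) (hA : MeasurableSet A) (hB : MeasurableSet B) :
    essBoundary μ (A \ B) ⊆ essBoundary μ A ∪ essBoundary μ B := by
  have h := essBoundary_union_subset (μ := μ) Aᶜ B
  rwa [essBoundary_compl hfin hpos hA, ← essBoundary_compl hfin hpos (hA.compl.union hB),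
    compl_union, compl_compl, ← sdiff_eq] at h

end Density

theorem continuous_snK (k : ℝ) : Continuous (snK k) := by
  unfold snK
  split_ifs
  · exact continuous_id
  · fun_prop

theorem exists_pos_forall_modelSurf_lt {n : ℕ} (hn : 2 ≤ n) (k : ℝ) {c : ℝ≥0∞} (hc : c ≠ 0) :
    ∃ r₀ > 0, ∀ ρ ∈ Icc 0 r₀, ENNReal.ofReal (modelSurf n k ρ) < c := by
  have hcont : Continuous fun ρ ↦ ENNReal.ofReal (modelSurf n k ρ) :=
    ENNReal.continuous_ofReal.comp (continuous_const.mul ((continuous_snK k).pow _))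
  have hzero : ENNReal.ofReal (modelSurf n k 0) = 0 := by
    simp [modelSurf, snK, zero_pow (by omega : n - 1 ≠ 0)]
  obtain ⟨ε, hε, hsmall⟩ := Metric.eventually_nhds_iff.1
    ((hzero ▸ hcont.tendsto 0).eventually_lt_const (pos_iff_ne_zero.2 hc))
  refine ⟨ε / 2, half_pos hε, fun ρ hρ ↦ hsmall ?_⟩
  rw [Real.dist_0_eq_abs, abs_of_nonneg hρ.1]
  linarith [hρ.2]

section Profile

variable {X : Type*} [MetricSpace X] [MeasurableSpace X] {μ : Measure X} {n : ℕ} {k : ℝ}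
  {E G : Set X} {x : X}

theorem exists_mem_densitySet_one_of_ae (hG : MeasurableSet G) (hG0 : μ G ≠ 0)
    (hleb : μ (G \ densitySet μ G 1) = 0) {p : X → Prop} (hp : ∀ᵐ x ∂μ, p x) :
    ∃ x ∈ densitySet μ G 1, p x := by
  have hdens : ∀ᵐ x ∂μ, x ∈ G → x ∈ densitySet μ G 1 :=
    ae_iff.2 (measure_mono_null (fun _ hx ↦ by simpa using hx) hleb)
  have hrestr : ∀ᵐ x ∂μ.restrict G, x ∈ densitySet μ G 1 ∧ p x :=
    (ae_restrict_iff' hG).2 ((hdens.and hp).mono fun _ h hxG ↦ ⟨h.1 hxG, h.2⟩)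
  obtain ⟨x, -, hx⟩ := Measure.exists_mem_of_measure_ne_zero_of_ae hG0 hrestr
  exact ⟨x, hx⟩

theorem measure_inter_ball_pos_of_mem_densitySet_one (hx : x ∈ densitySet μ G 1) {r : ℝ}
    (hr : 0 < r) : 0 < μ (G ∩ ball x r) := by
  obtain ⟨s, hs, hsr⟩ := ((hx.eventually (lt_mem_nhds zero_lt_one)).and (Ioo_mem_nhdsGT hr)).exists
  exact (ENNReal.div_pos_iff.1 hs).1.bot_lt.trans_le
    (measure_mono (inter_subset_inter_right G (ball_subset_ball hsr.2.le)))

variable [BorelSpace X]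

theorem exists_pos_forall_perimeter_ball_lt (hn : 2 ≤ n)
    (hx : ∀ ρ : ℝ, 0 < ρ →
      μH[(n : ℝ) - 1] (essBoundary μ (ball x ρ)) ≤ ENNReal.ofReal (modelSurf n k ρ))
    {c : ℝ≥0∞} (hc : c ≠ 0) :
    ∃ r₀ > 0, ∀ ρ ∈ Icc 0 r₀, μH[(n : ℝ) - 1] (essBoundary μ (ball x ρ)) < c := by
  obtain ⟨r₀, hr₀, hsmall⟩ := exists_pos_forall_modelSurf_lt hn k hc
  refine ⟨r₀, hr₀, fun ρ hρ ↦ ?_⟩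
  rcases hρ.1.eq_or_lt with rfl | hρ0
  · simpa [essBoundary_empty] using pos_iff_ne_zero.2 hc
  · exact (hx ρ hρ0).trans_lt (hsmall ρ hρ)

theorem isoProfile_le (hE : MeasurableSet E) {V : ℝ} (hEV : μ E = ENNReal.ofReal V) :
    isoProfile μ n V ≤ μH[(n : ℝ) - 1] (essBoundary μ E) :=
  iInf₂_le_of_le E hE (iInf_le _ hEV)

theorem eventually_nhdsLE_isoProfile_lt (hn : 2 ≤ n) (hfin : ∀ x r, μ (ball x r) ≠ ∞)
    (hpos : ∀ x r, 0 < r → 0 < μ (ball x r)) (hsph : ∀ x r, μ (sphere x r) = 0)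
    (hball : ∀ᵐ x ∂μ, ∀ ρ : ℝ, 0 < ρ →
      μH[(n : ℝ) - 1] (essBoundary μ (ball x ρ)) ≤ ENNReal.ofReal (modelSurf n k ρ))
    (hE : MeasurableSet E) (hE0 : μ E ≠ 0) (hleb : μ (E \ densitySet μ E 1) = 0) {V : ℝ}
    (hEV : μ E = ENNReal.ofReal V) {y : ℝ≥0∞} (hy : μH[(n : ℝ) - 1] (essBoundary μ E) < y) :
    ∀ᶠ V' in 𝓝[≤] V, isoProfile μ n V' < y := by
  obtain ⟨x, hx1, hxball⟩ := exists_mem_densitySet_one_of_ae hE hE0 hleb hball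
  obtain ⟨r₀, hr₀, hsmall⟩ := exists_pos_forall_perimeter_ball_lt hn hxball (tsub_pos_of_lt hy).ne'
  have hδ : 0 < (μ (E ∩ ball x r₀)).toReal := ENNReal.toReal_pos
    (measure_inter_ball_pos_of_mem_densitySet_one hx1 hr₀).ne'
    (measure_ne_top_of_subset inter_subset_right (hfin x r₀))
  filter_upwards [Ioc_mem_nhdsLE (sub_lt_self V hδ)] with V' ⟨hV'δ, hV'V⟩
  obtain ⟨ρ, hρ, hρV'⟩ := exists_radius_measure_inter_ball_eq hE (hfin x) (hsph x) hr₀.le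
    (ENNReal.ofReal_le_of_le_toReal (a := V - V') (by linarith))
  have hmeas : μ (E \ ball x ρ) = ENNReal.ofReal V' := by
    rw [ENNReal.eq_sub_of_add_eq (measure_ne_top_of_subset inter_subset_right (hfin x ρ))
      (measure_sdiff_add_inter E measurableSet_ball), hEV, hρV',
      ← ENNReal.ofReal_sub _ (sub_nonneg.2 hV'V), sub_sub_cancel]
  calc isoProfile μ n V' ≤ μH[(n : ℝ) - 1] (essBoundary μ (E \ ball x ρ)) :=
        isoProfile_le (hE.diff measurableSet_ball) hmeas
    _ ≤ μH[(n : ℝ) - 1] (essBoundary μ E) + μH[(n : ℝ) - 1] (essBoundary μ (ball x ρ)) :=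
        (measure_mono (essBoundary_diff_subset hfin hpos hE measurableSet_ball)).trans
          (measure_union_le _ _)
    _ < μH[(n : ℝ) - 1] (essBoundary μ E) + (y - μH[(n : ℝ) - 1] (essBoundary μ E)) :=
        ENNReal.add_lt_add_left hy.ne_top (hsmall ρ hρ)
    _ = y := add_tsub_cancel_of_le hy.le

theorem eventually_nhdsGE_isoProfile_lt (hn : 2 ≤ n) (hfin : ∀ x r, μ (ball x r) ≠ ∞)
    (hpos : ∀ x r, 0 < r → 0 < μ (ball x r)) (hsph : ∀ x r, μ (sphere x r) = 0)
    (hball : ∀ᵐ x ∂μ, ∀ ρ : ℝ, 0 < ρ →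
      μH[(n : ℝ) - 1] (essBoundary μ (ball x ρ)) ≤ ENNReal.ofReal (modelSurf n k ρ))
    (hE : MeasurableSet E) (hEc0 : μ Eᶜ ≠ 0) (hleb : μ (Eᶜ \ densitySet μ E 0) = 0) {V : ℝ}
    (hV : 0 ≤ V) (hEV : μ E = ENNReal.ofReal V) {y : ℝ≥0∞}
    (hy : μH[(n : ℝ) - 1] (essBoundary μ E) < y) :
    ∀ᶠ V' in 𝓝[≥] V, isoProfile μ n V' < y := by
  rw [← densitySet_compl_one hfin hpos hE] at hleb
  obtain ⟨x, hx1, hxball⟩ := exists_mem_densitySet_one_of_ae hE.compl hEc0 hleb hball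
  obtain ⟨r₀, hr₀, hsmall⟩ := exists_pos_forall_perimeter_ball_lt hn hxball (tsub_pos_of_lt hy).ne'
  have hδ : 0 < (μ (Eᶜ ∩ ball x r₀)).toReal := ENNReal.toReal_pos
    (measure_inter_ball_pos_of_mem_densitySet_one hx1 hr₀).ne'
    (measure_ne_top_of_subset inter_subset_right (hfin x r₀))
  filter_upwards [Ico_mem_nhdsGE (lt_add_of_pos_right V hδ)] with V' ⟨hVV', hV'δ⟩
  obtain ⟨ρ, hρ, hρV'⟩ := exists_radius_measure_inter_ball_eq hE.compl (hfin x) (hsph x) hr₀.le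
    (ENNReal.ofReal_le_of_le_toReal (a := V' - V) (by linarith))
  have hmeas : μ (E ∪ ball x ρ) = ENNReal.ofReal V' := by
    rw [← union_sdiff_self, measure_union disjoint_sdiff_right (measurableSet_ball.diff hE),
      sdiff_eq_compl_inter, hEV, hρV', ← ENNReal.ofReal_add hV (sub_nonneg.2 hVV'),
      add_sub_cancel]
  calc isoProfile μ n V' ≤ μH[(n : ℝ) - 1] (essBoundary μ (E ∪ ball x ρ)) :=
        isoProfile_le (hE.union measurableSet_ball) hmeas
    _ ≤ μH[(n : ℝ) - 1] (essBoundary μ E) + μH[(n : ℝ) - 1] (essBoundary μ (ball x ρ)) :=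
        (measure_mono (essBoundary_union_subset E (ball x ρ))).trans (measure_union_le _ _)
    _ < μH[(n : ℝ) - 1] (essBoundary μ E) + (y - μH[(n : ℝ) - 1] (essBoundary μ E)) :=
        ENNReal.add_lt_add_left hy.ne_top (hsmall ρ hρ)
    _ = y := add_tsub_cancel_of_le hy.le

end Profile

theorem isoProfile_upperSemicontinuous_general
    {X : Type*} [MetricSpace X] [MeasurableSpace X] [BorelSpace X]
    (n : ℕ) (hn : 2 ≤ n) (k : ℝ)
    (μ : Measure X)
    (hfinbd : ∀ s : Set X, IsBounded s → μ s ≠ ⊤)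
    (hpos : ∀ (x : X) (r : ℝ), 0 < r → 0 < μ (ball x r))
    (hsph : ∀ (p : X) (r : ℝ), 0 < r → μ (sphere p r) = 0)
    (hleb : ∀ E : Set X, MeasurableSet E →
      μ (E \ densitySet μ E 1) = 0 ∧ μ (Eᶜ \ densitySet μ E 0) = 0)
    (hball : ∀ᵐ x ∂μ, ∀ ρ : ℝ, 0 < ρ →
      μH[(n : ℝ) - 1] (essBoundary μ (ball x ρ)) ≤ ENNReal.ofReal (modelSurf n k ρ)) :
    UpperSemicontinuousOn (isoProfile μ n)
      {V : ℝ | 0 < V ∧ ENNReal.ofReal V < μ Set.univ} := by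
  rintro V ⟨hV0, hVμ⟩ y hy
  obtain ⟨E, hE, hEV, hEy⟩ : ∃ E, MeasurableSet E ∧ μ E = ENNReal.ofReal V ∧
      μH[(n : ℝ) - 1] (essBoundary μ E) < y := by
    simpa only [isoProfile, iInf_lt_iff, exists_prop] using hy
  have hE0 : μ E ≠ 0 := by
    rw [hEV]
    exact (ENNReal.ofReal_pos.2 hV0).ne'
  have hEc0 : μ Eᶜ ≠ 0 := fun h ↦ hVμ.ne (by rw [← measure_add_measure_compl hE, h, add_zero, hEV])
  obtain ⟨p, hp⟩ := nonempty_of_measure_ne_zero hE0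
  obtain ⟨q, hq⟩ := nonempty_of_measure_ne_zero hEc0
  have : Nontrivial X := ⟨p, q, fun h ↦ hq (h ▸ hp)⟩
  have hfin : ∀ x r, μ (ball x r) ≠ ∞ := fun x r ↦ hfinbd _ isBounded_ball
  have hnull := measure_sphere_eq_zero_of_pos hsph
  refine Eventually.filter_mono nhdsWithin_le_nhds ?_
  rw [← nhdsLE_sup_nhdsGE, eventually_sup]
  exact ⟨eventually_nhdsLE_isoProfile_lt hn hfin hpos hnull hball hE hE0 (hleb E hE).1 hEV hEy,
    eventually_nhdsGE_isoProfile_lt hn hfin hpos hnull hball hE hEc0 (hleb E hE).2 hV0.le hEV hEy⟩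

/-- Upper semicontinuity of the isoperimetric profile. -/
theorem isoProfile_upperSemicontinuous
    {X : Type*} [MetricSpace X] [MeasurableSpace X] [BorelSpace X]
    (n : ℕ) (hn : 2 ≤ n) (k : ℝ) (hk : k ≤ 0)
    (μ : Measure X)
    (hfinbd : ∀ s : Set X, IsBounded s → μ s ≠ ⊤)
    (hpos : ∀ (x : X) (r : ℝ), 0 < r → 0 < μ (ball x r))
    (hsph : ∀ (p : X) (r : ℝ), 0 < r → μ (sphere p r) = 0)
    (hleb : ∀ E : Set X, MeasurableSet E →
      μ (E \ densitySet μ E 1) = 0 ∧ μ (Eᶜ \ densitySet μ E 0) = 0)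
    (hball : ∀ᵐ x ∂μ, ∀ ρ : ℝ, 0 < ρ →
      μH[(n : ℝ) - 1] (essBoundary μ (ball x ρ)) ≤ ENNReal.ofReal (modelSurf n k ρ)) :
    UpperSemicontinuousOn (isoProfile μ n)
      {V : ℝ | 0 < V ∧ ENNReal.ofReal V < μ Set.univ} :=
  isoProfile_upperSemicontinuous_general n hn k μ hfinbd hpos hsph hleb hball
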